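/- arXiv:2204.01520 — 2 statements merged into one kernel-verified Lean document; each statement's English description precedes it below -/
import Mathlib

section
/- Under the asymmetric LLL condition (there exists $x:\mathcal{C}\to(0,1)$ with $\mathbb{P}[\neg c]\le x(c)\prod_{c' \sim c}(1-x(c'))$ for all $c$), for any event $A$ determined by the assignment on a subset $\mathrm{vbl}(A)\subseteq V$ of variables, the conditional probability satisfies $\mathbb{P}[A \mid \bigwedge_{c\in\mathcal{C}} c] \le \mathbb{P}[A]\cdot \prod_{c: \mathrm{vbl}(c)\cap \mathrm{vbl}(A)\neq\emptyset}(1-x(c))^{-1}$. -/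
open Finset
open scoped Classical

/-- The probability of an event under the uniform product distribution over assignments. -/
noncomputable def unifPr {V : Type*} [Fintype V] [DecidableEq V]
    {Q : V → Type*} [∀ v, Fintype (Q v)]
    (A : (∀ v, Q v) → Prop) : ℝ :=
  ((Finset.univ.filter A).card : ℝ) / (Fintype.card (∀ v, Q v) : ℝ)

section aux
variable {V : Type*} [Fintype V] [DecidableEq V]
    {Q : V → Type*} [∀ v, Fintype (Q v)]

lemma unifPr_nonneg (A : (∀ v, Q v) → Prop) : 0 ≤ unifPr A :=
  div_nonneg (by positivity) (by positivity)

lemma unifPr_congr {A B : (∀ v, Q v) → Prop} (h : ∀ σ, A σ ↔ B σ) :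
    unifPr A = unifPr B := by
  have hf : (Finset.univ.filter A) = Finset.univ.filter B := by
    ext σ; simp [h σ]
  unfold unifPr
  rw [hf]

lemma unifPr_mono {A B : (∀ v, Q v) → Prop} (h : ∀ σ, A σ → B σ) :
    unifPr A ≤ unifPr B := by
  unfold unifPr
  have hc : ((Finset.univ.filter A).card : ℝ) ≤ ((Finset.univ.filter B).card : ℝ) := by
    exact_mod_cast Finset.card_le_card (fun σ hσ => by
      simp only [Finset.mem_filter] at *
      exact ⟨hσ.1, h σ hσ.2⟩)
  gcongr

lemma unifPr_split (c : (∀ v, Q v) → Prop) (A : (∀ v, Q v) → Prop) :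
    unifPr (fun σ => c σ ∧ A σ) + unifPr (fun σ => ¬ c σ ∧ A σ) = unifPr A := by
  have h3 := Finset.card_filter_add_card_filter_not
    (s := Finset.univ.filter A) (p := c)
  unfold unifPr
  rw [← add_div]
  congr 1
  norm_cast
  convert h3 using 3
  · ext σ; simp [and_comm]
  · ext σ; simp [and_comm]

end aux

lemma unifPr_indep {V : Type*} [Fintype V] [DecidableEq V]
    {Q : V → Type*} [∀ v, Fintype (Q v)]
    (A B : (∀ v, Q v) → Prop) (sA sB : Finset V)
    (hdisj : ∀ v ∈ sA, v ∉ sB)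
    (hA : ∀ σ τ : ∀ v, Q v, (∀ v ∈ sA, σ v = τ v) → (A σ ↔ A τ))
    (hB : ∀ σ τ : ∀ v, Q v, (∀ v ∈ sB, σ v = τ v) → (B σ ↔ B τ)) :
    unifPr (fun σ => A σ ∧ B σ) = unifPr A * unifPr B := by
  classical
  set m : (∀ v, Q v) → (∀ v, Q v) → (∀ v, Q v) :=
    fun σ τ v => if v ∈ sA then σ v else τ v with hm
  have hmA : ∀ σ τ, A (m σ τ) ↔ A σ := fun σ τ =>
    hA _ _ (fun v hv => by simp [hm, if_pos hv])
  have hmB : ∀ σ τ, B (m σ τ) ↔ B τ := fun σ τ =>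
    hB _ _ (fun v hv => by
      have : v ∉ sA := fun h => hdisj v h hv
      simp [hm, if_neg this])
  have hmm : ∀ σ τ : ∀ v, Q v, m (m σ τ) (m τ σ) = σ := by
    intro σ τ; funext v
    by_cases h : v ∈ sA <;> simp [hm, h]
  have key : ((@Finset.filter _ (fun σ => A σ ∧ B σ) (fun σ => Classical.propDecidable _) Finset.univ).card) * Fintype.card (∀ v, Q v)
      = (Finset.univ.filter A).card * (Finset.univ.filter B).card := by
    rw [← Finset.card_univ, ← Finset.card_product, ← Finset.card_product]
    apply Finset.card_bij' (i := fun p _ => (m p.1 p.2, m p.2 p.1))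
      (j := fun p _ => (m p.1 p.2, m p.2 p.1))
    · intro p hp
      simp only [Finset.mem_product, Finset.mem_filter, Finset.mem_univ, true_and] at hp ⊢
      exact ⟨(hmA p.1 p.2).mpr hp.1.1, (hmB p.2 p.1).mpr hp.1.2⟩
    · intro p hp
      simp only [Finset.mem_product, Finset.mem_filter, Finset.mem_univ, true_and] at hp ⊢
      exact ⟨⟨(hmA p.1 p.2).mpr hp.1, (hmB p.1 p.2).mpr hp.2⟩, trivial⟩
    · intro p hp
      simp only [hmm]
    · intro p hp
      simp only [hmm]
  have hD : (0:ℝ) ≤ (Fintype.card (∀ v, Q v) : ℝ) := by positivity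
  rcases eq_or_lt_of_le hD with h0 | hpos
  · unfold unifPr
    rw [← h0]
    simp
  · unfold unifPr
    rw [div_mul_div_comm, div_eq_div_iff (by positivity) (by positivity)]
    have : ((@Finset.filter _ (fun σ => A σ ∧ B σ) (fun σ => Classical.propDecidable _) Finset.univ).card : ℝ) * Fintype.card (∀ v, Q v)
        = (Finset.univ.filter A).card * (Finset.univ.filter B).card := by exact_mod_cast key
    linear_combination this * (Fintype.card (∀ v, Q v) : ℝ)

section main
variable {V : Type*} [Fintype V] [DecidableEq V]
    {Q : V → Type*} [∀ v, Fintype (Q v)]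
    {C : Type*} [Fintype C]
    (vbl : C → Finset V) (constr : C → (∀ v, Q v) → Prop)
    (hdep : ∀ c, ∀ σ τ : ∀ v, Q v, (∀ v ∈ vbl c, σ v = τ v) → (constr c σ ↔ constr c τ))
    (x : C → ℝ) (hx : ∀ c, 0 < x c ∧ x c < 1)

include hdep hx in
lemma hss_peel
    (hLLL : ∀ c, unifPr (fun σ => ¬ constr c σ) ≤
      x c * ∏ c' ∈ Finset.univ.filter (fun c' => (vbl c ∩ vbl c').Nonempty), (1 - x c'))
    (m : ℕ)
    (hcore : ∀ T : Finset C, T.card < m → ∀ c,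
      unifPr (fun σ => ¬ constr c σ ∧ ∀ c' ∈ T, constr c' σ)
        ≤ x c * unifPr (fun σ => ∀ c' ∈ T, constr c' σ)) :
    ∀ Γ T : Finset C, Disjoint Γ T → (Γ ∪ T).card ≤ m →
      (∏ c ∈ Γ, (1 - x c)) * unifPr (fun σ => ∀ c' ∈ T, constr c' σ)
        ≤ unifPr (fun σ => ∀ c' ∈ Γ ∪ T, constr c' σ) := by
  intro Γ
  induction Γ using Finset.induction_on with
  | empty =>
    intro T _ _
    rw [Finset.empty_union, Finset.prod_empty, one_mul]
  | @insert a Γ ha ih =>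
    intro T hdisj hcard
    have haT : a ∉ T := (Finset.disjoint_insert_left.mp hdisj).1
    have hdisj' : Disjoint Γ T := (Finset.disjoint_insert_left.mp hdisj).2
    have haU : a ∉ Γ ∪ T := by simp [ha, haT]
    have hins : insert a Γ ∪ T = insert a (Γ ∪ T) := by
      rw [Finset.insert_union]
    have hUcard : (Γ ∪ T).card < m := by
      rw [hins, Finset.card_insert_of_notMem haU] at hcard; omega
    have hsplit := unifPr_split (fun σ => constr a σ)
      (fun σ => ∀ c' ∈ Γ ∪ T, constr c' σ)
    have hEins : unifPr (fun σ => ∀ c' ∈ insert a Γ ∪ T, constr c' σ)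
        = unifPr (fun σ => constr a σ ∧ ∀ c' ∈ Γ ∪ T, constr c' σ) := by
      apply unifPr_congr
      intro σ
      rw [hins, Finset.forall_mem_insert]
    have hC := hcore (Γ ∪ T) hUcard a
    have hIH := ih T hdisj' (le_of_lt hUcard)
    have hxa := hx a
    have hprodnn : 0 ≤ ∏ c ∈ Γ, (1 - x c) :=
      Finset.prod_nonneg (fun i _ => by linarith [(hx i).2])
    have hprnn := unifPr_nonneg (fun σ => ∀ c' ∈ Γ ∪ T, constr c' σ)
    have hprTnn := unifPr_nonneg (fun σ => ∀ c' ∈ T, constr c' σ)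
    rw [hEins, Finset.prod_insert ha]
    nlinarith [hIH, hC, hsplit]

include hdep hx in
lemma hss_core_step
    (hLLL : ∀ c, unifPr (fun σ => ¬ constr c σ) ≤
      x c * ∏ c' ∈ Finset.univ.filter (fun c' => (vbl c ∩ vbl c').Nonempty), (1 - x c'))
    (S : Finset C)
    (hcore : ∀ T : Finset C, T.card < S.card → ∀ c,
      unifPr (fun σ => ¬ constr c σ ∧ ∀ c' ∈ T, constr c' σ)
        ≤ x c * unifPr (fun σ => ∀ c' ∈ T, constr c' σ))
    (c : C) :
    unifPr (fun σ => ¬ constr c σ ∧ ∀ c' ∈ S, constr c' σ)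
      ≤ x c * unifPr (fun σ => ∀ c' ∈ S, constr c' σ) := by
  classical
  set Γ : Finset C := S.filter (fun c' => (vbl c ∩ vbl c').Nonempty) with hΓ
  set S₂ : Finset C := S \ Γ with hS₂
  have hΓS : Γ ⊆ S := Finset.filter_subset _ _
  have hUnion : Γ ∪ S₂ = S := Finset.union_sdiff_of_subset hΓS
  have hdisj : Disjoint Γ S₂ := Finset.disjoint_sdiff
  -- Step 1: monotonicity
  have step1 : unifPr (fun σ => ¬ constr c σ ∧ ∀ c' ∈ S, constr c' σ)
      ≤ unifPr (fun σ => ¬ constr c σ ∧ ∀ c' ∈ S₂, constr c' σ) :=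
    unifPr_mono (fun σ h => ⟨h.1, fun c' hc' =>
      h.2 c' (Finset.sdiff_subset hc')⟩)
  -- Step 2: independence
  have step2 : unifPr (fun σ => ¬ constr c σ ∧ ∀ c' ∈ S₂, constr c' σ)
      = unifPr (fun σ => ¬ constr c σ) * unifPr (fun σ => ∀ c' ∈ S₂, constr c' σ) := by
    apply unifPr_indep _ _ (vbl c) (S₂.biUnion vbl)
    · intro v hv hv'
      obtain ⟨c'', hc'', hv''⟩ := Finset.mem_biUnion.mp hv'
      have hmem : c'' ∈ Γ := Finset.mem_filter.mpr
        ⟨(Finset.mem_sdiff.mp hc'').1, ⟨v, Finset.mem_inter.mpr ⟨hv, hv''⟩⟩⟩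
      exact (Finset.mem_sdiff.mp hc'').2 hmem
    · intro σ τ h
      exact not_congr (hdep c σ τ h)
    · intro σ τ h
      constructor
      · intro H c'' hc''
        exact (hdep c'' σ τ (fun v hv =>
          h v (Finset.mem_biUnion.mpr ⟨c'', hc'', hv⟩))).mp (H c'' hc'')
      · intro H c'' hc''
        exact (hdep c'' σ τ (fun v hv =>
          h v (Finset.mem_biUnion.mpr ⟨c'', hc'', hv⟩))).mpr (H c'' hc'')
  -- Step 3+4: LLL condition and dropping factors
  have hΓF : Γ ⊆ Finset.univ.filter (fun c' => (vbl c ∩ vbl c').Nonempty) :=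
    fun c' hc' => Finset.mem_filter.mpr ⟨Finset.mem_univ _, (Finset.mem_filter.mp hc').2⟩
  have hprod := Finset.prod_sdiff (f := fun c' => (1 - x c')) hΓF
  have hrest : ∏ c' ∈ (Finset.univ.filter (fun c' => (vbl c ∩ vbl c').Nonempty)) \ Γ,
      (1 - x c') ≤ 1 :=
    Finset.prod_le_one (fun i _ => by linarith [(hx i).2]) (fun i _ => by linarith [(hx i).1])
  have hΓnn : 0 ≤ ∏ c' ∈ Γ, (1 - x c') :=
    Finset.prod_nonneg (fun i _ => by linarith [(hx i).2])
  have step34 : unifPr (fun σ => ¬ constr c σ) ≤ x c * ∏ c' ∈ Γ, (1 - x c') := by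
    have h3 := hLLL c
    have h4 : ∏ c' ∈ Finset.univ.filter (fun c' => (vbl c ∩ vbl c').Nonempty), (1 - x c')
        ≤ ∏ c' ∈ Γ, (1 - x c') := by nlinarith [hprod, hrest, hΓnn]
    nlinarith [(hx c).1, unifPr_nonneg (fun σ => ¬ constr c σ)]
  -- Step 5: peeling
  have step5 : (∏ c' ∈ Γ, (1 - x c')) * unifPr (fun σ => ∀ c' ∈ S₂, constr c' σ)
      ≤ unifPr (fun σ => ∀ c' ∈ S, constr c' σ) := by
    have := hss_peel vbl constr hdep x hx hLLL S.card hcore Γ S₂ hdisj (by rw [hUnion])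
    rw [hUnion] at this
    exact this
  have hprS₂ := unifPr_nonneg (fun σ => ∀ c' ∈ S₂, constr c' σ)
  calc unifPr (fun σ => ¬ constr c σ ∧ ∀ c' ∈ S, constr c' σ)
      ≤ unifPr (fun σ => ¬ constr c σ) * unifPr (fun σ => ∀ c' ∈ S₂, constr c' σ) := by
        rw [← step2]; exact step1
    _ ≤ (x c * ∏ c' ∈ Γ, (1 - x c')) * unifPr (fun σ => ∀ c' ∈ S₂, constr c' σ) :=
        mul_le_mul_of_nonneg_right step34 hprS₂
    _ = x c * ((∏ c' ∈ Γ, (1 - x c')) * unifPr (fun σ => ∀ c' ∈ S₂, constr c' σ)) := by ring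
    _ ≤ x c * unifPr (fun σ => ∀ c' ∈ S, constr c' σ) :=
        mul_le_mul_of_nonneg_left step5 (le_of_lt (hx c).1)


include hdep hx in
lemma hss_core
    (hLLL : ∀ c, unifPr (fun σ => ¬ constr c σ) ≤
      x c * ∏ c' ∈ Finset.univ.filter (fun c' => (vbl c ∩ vbl c').Nonempty), (1 - x c'))
    (n : ℕ) :
    ∀ S : Finset C, S.card ≤ n → ∀ c,
      unifPr (fun σ => ¬ constr c σ ∧ ∀ c' ∈ S, constr c' σ)
        ≤ x c * unifPr (fun σ => ∀ c' ∈ S, constr c' σ) := by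
  induction n with
  | zero =>
    intro S hS c
    exact hss_core_step vbl constr hdep x hx hLLL S (fun T hT => absurd hT (by omega)) c
  | succ n ih =>
    intro S hS c
    exact hss_core_step vbl constr hdep x hx hLLL S
      (fun T hT c' => ih T (by omega) c') c

end main

/-- Haeupler–Saha–Srinivasan: under the asymmetric LLL condition, the probability of an
event `A` conditioned on all constraints being satisfied is at most `ℙ[A]` times
`∏ (1 - x c)⁻¹` over the constraints sharing a variable with `A`. -/
theorem stmt1
    {V : Type*} [Fintype V] [DecidableEq V]
    {Q : V → Type*} [∀ v, Fintype (Q v)] [∀ v, Nonempty (Q v)]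
    {C : Type*} [Fintype C]
    (vbl : C → Finset V)
    (constr : C → (∀ v, Q v) → Prop)
    (hdep : ∀ c, ∀ (σ τ : ∀ v, Q v), (∀ v ∈ vbl c, σ v = τ v) → (constr c σ ↔ constr c τ))
    (x : C → ℝ) (hx : ∀ c, 0 < x c ∧ x c < 1)
    (hLLL : ∀ c, unifPr (fun σ => ¬ constr c σ) ≤
      x c * ∏ c' ∈ Finset.univ.filter
        (fun c' => (vbl c ∩ vbl c').Nonempty), (1 - x c'))
    (A : (∀ v, Q v) → Prop) (vblA : Finset V)
    (hAdep : ∀ (σ τ : ∀ v, Q v), (∀ v ∈ vblA, σ v = τ v) → (A σ ↔ A τ)) :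
    unifPr (fun σ => A σ ∧ ∀ c, constr c σ) / unifPr (fun σ => ∀ c, constr c σ)
      ≤ unifPr A *
        ∏ c ∈ Finset.univ.filter (fun c => (vbl c ∩ vblA).Nonempty), (1 - x c)⁻¹ := by
  classical
  have hcoreAll : ∀ (S : Finset C) (c : C),
      unifPr (fun σ => ¬ constr c σ ∧ ∀ c' ∈ S, constr c' σ)
        ≤ x c * unifPr (fun σ => ∀ c' ∈ S, constr c' σ) :=
    fun S c => hss_core vbl constr hdep x hx hLLL S.card S le_rfl c
  set ΓA : Finset C := Finset.univ.filter (fun c => (vbl c ∩ vblA).Nonempty) with hΓA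
  set S₂ : Finset C := Finset.univ \ ΓA with hS₂
  have hUnion : ΓA ∪ S₂ = Finset.univ := Finset.union_sdiff_of_subset (Finset.filter_subset _ _)
  have hdisj : Disjoint ΓA S₂ := Finset.disjoint_sdiff
  -- all-constraints event vs Finset version
  have hPE : unifPr (fun σ => ∀ c, constr c σ)
      = unifPr (fun σ => ∀ c ∈ (Finset.univ : Finset C), constr c σ) :=
    unifPr_congr (fun σ => by simp)
  -- Step 1: monotonicity
  have step1 : unifPr (fun σ => A σ ∧ ∀ c, constr c σ)
      ≤ unifPr (fun σ => A σ ∧ ∀ c' ∈ S₂, constr c' σ) :=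
    unifPr_mono (fun σ h => ⟨h.1, fun c' _ => h.2 c'⟩)
  -- Step 2: independence
  have step2 : unifPr (fun σ => A σ ∧ ∀ c' ∈ S₂, constr c' σ)
      = unifPr A * unifPr (fun σ => ∀ c' ∈ S₂, constr c' σ) := by
    apply unifPr_indep _ _ vblA (S₂.biUnion vbl)
    · intro v hv hv'
      obtain ⟨c'', hc'', hv''⟩ := Finset.mem_biUnion.mp hv'
      have hmem : c'' ∈ ΓA := Finset.mem_filter.mpr
        ⟨Finset.mem_univ _, ⟨v, Finset.mem_inter.mpr ⟨hv'', hv⟩⟩⟩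
      exact (Finset.mem_sdiff.mp hc'').2 hmem
    · exact hAdep
    · intro σ τ h
      constructor
      · intro H c'' hc''
        exact (hdep c'' σ τ (fun v hv =>
          h v (Finset.mem_biUnion.mpr ⟨c'', hc'', hv⟩))).mp (H c'' hc'')
      · intro H c'' hc''
        exact (hdep c'' σ τ (fun v hv =>
          h v (Finset.mem_biUnion.mpr ⟨c'', hc'', hv⟩))).mpr (H c'' hc'')
  -- Step 3: peeling
  have step3 : (∏ c ∈ ΓA, (1 - x c)) * unifPr (fun σ => ∀ c' ∈ S₂, constr c' σ)
      ≤ unifPr (fun σ => ∀ c' ∈ (Finset.univ : Finset C), constr c' σ) := by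
    have := hss_peel vbl constr hdep x hx hLLL (Finset.univ : Finset C).card
      (fun T _ c => hcoreAll T c) ΓA S₂ hdisj (by rw [hUnion])
    rwa [hUnion] at this
  have hK : 0 < ∏ c ∈ ΓA, (1 - x c) :=
    Finset.prod_pos (fun i _ => by linarith [(hx i).2])
  have hAnn := unifPr_nonneg A
  have hS₂nn := unifPr_nonneg (fun σ => ∀ c' ∈ S₂, constr c' σ)
  have hPnn := unifPr_nonneg (fun σ => ∀ c, constr c σ)
  have hinv : ∏ c ∈ ΓA, (1 - x c)⁻¹ = (∏ c ∈ ΓA, (1 - x c))⁻¹ := by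
    rw [← Finset.prod_inv_distrib]
  have hnum : unifPr (fun σ => A σ ∧ ∀ c, constr c σ)
      ≤ unifPr A * (∏ c ∈ ΓA, (1 - x c))⁻¹ * unifPr (fun σ => ∀ c, constr c σ) := by
    have h5 : unifPr (fun σ => ∀ c' ∈ S₂, constr c' σ)
        ≤ (∏ c ∈ ΓA, (1 - x c))⁻¹ * unifPr (fun σ => ∀ c, constr c σ) := by
      rw [hPE]
      rw [← le_div_iff₀' hK, div_eq_inv_mul] at step3
      exact step3
    calc unifPr (fun σ => A σ ∧ ∀ c, constr c σ)
        ≤ unifPr A * unifPr (fun σ => ∀ c' ∈ S₂, constr c' σ) := by rw [← step2]; exact step1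
      _ ≤ unifPr A * ((∏ c ∈ ΓA, (1 - x c))⁻¹ * unifPr (fun σ => ∀ c, constr c σ)) :=
          mul_le_mul_of_nonneg_left h5 hAnn
      _ = unifPr A * (∏ c ∈ ΓA, (1 - x c))⁻¹ * unifPr (fun σ => ∀ c, constr c σ) := by ring
  rw [hinv]
  rcases eq_or_lt_of_le hPnn with h0 | hpos
  · have hz : unifPr (fun σ => A σ ∧ ∀ c, constr c σ) = 0 := by
      have h1 := unifPr_nonneg (fun σ => A σ ∧ ∀ c, constr c σ)
      nlinarith [hnum, hAnn, inv_nonneg.mpr (le_of_lt hK)]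
    rw [hz, zero_div]
    positivity
  · rw [div_le_iff₀ hpos]
    exact hnum
end

section
/- Let $G=(\mathcal{C},E)$ be the dependency graph of a CSP (vertices are constraints; edges join constraints sharing a variable), with maximum degree at most $\Delta-1$. Let $S\subseteq\mathcal{C}$ be a set of constraints such that the square graph $G^2(S)$ (joining constraints at distance at most 2 in $G$) is connected. Then for each $c\in S$ there exists a $\{2,3\}$-tree $T\subseteq S$ in $G$ with $c\in T$ and $|T|\ge |S|/\Delta$. -/
open Finset
open scoped Classical

/-- The auxiliary graph joining distinct vertices at (original) graph distance 2 or 3. -/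
def closeGraph {V : Type*} (G : SimpleGraph V) : SimpleGraph V where
  Adj u v := u ≠ v ∧ (G.dist u v = 2 ∨ G.dist u v = 3)
  symm := by
    constructor
    intro u v h
    refine ⟨h.1.symm, ?_⟩
    rw [SimpleGraph.dist_comm]
    exact h.2
  loopless := by
    constructor
    intro v h
    exact h.1 rfl

/-- `T` is a `{2,3}`-tree in `G`. -/
def IsTwoThreeTree {V : Type*} (G : SimpleGraph V) (T : Finset V) : Prop :=
  (∀ u ∈ T, ∀ v ∈ T, u ≠ v → ¬ G.Adj u v) ∧
    ((closeGraph G).induce (T : Set V)).Connected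

/-- The square graph: distinct vertices are adjacent iff their distance in `G` is at most 2. -/
def sqGraph {V : Type*} (G : SimpleGraph V) : SimpleGraph V where
  Adj u v := u ≠ v ∧ (G.Adj u v ∨ G.dist u v = 2)
  symm := by
    constructor
    intro u v h
    refine ⟨h.1.symm, ?_⟩
    rcases h.2 with h2 | h2
    · exact Or.inl h2.symm
    · right
      rw [SimpleGraph.dist_comm]
      exact h2
  loopless := by
    constructor
    intro v h
    exact h.1 rfl

-- singleton induced graph connected
lemma connected_induce_singleton {V : Type*} (G' : SimpleGraph V) (c : V) :
    (G'.induce ({c} : Set V)).Connected := by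
  rw [SimpleGraph.connected_iff_exists_forall_reachable]
  refine ⟨⟨c, rfl⟩, fun w => ?_⟩
  have : w = ⟨c, rfl⟩ := Subtype.ext w.2
  rw [this]

lemma connected_induce_insert {V : Type*} [DecidableEq V] (G' : SimpleGraph V) (T : Finset V) (u t : V)
    (ht : t ∈ T) (hadj : G'.Adj u t)
    (hconn : (G'.induce (T : Set V)).Connected) :
    (G'.induce ((insert u T : Finset V) : Set V)).Connected := by
  classical
  have hsub : (T : Set V) ≤ ((insert u T : Finset V) : Set V) := by
    intro x hx; simp [Finset.coe_insert]; right; exact hx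
  have htmem : t ∈ ((insert u T : Finset V) : Set V) := by
    simp [Finset.coe_insert]; right; exact ht
  have humem : u ∈ ((insert u T : Finset V) : Set V) := by
    simp [Finset.coe_insert]
  rw [SimpleGraph.connected_iff_exists_forall_reachable]
  refine ⟨⟨t, htmem⟩, fun y => ?_⟩
  · 
    -- reduce: every vertex reachable to ⟨t, htmem⟩
    have key : ∀ x : ((insert u T : Finset V) : Set V),
        (G'.induce ((insert u T : Finset V) : Set V)).Reachable x ⟨t, htmem⟩ := by
      intro x
      rcases Finset.mem_insert.mp (by exact_mod_cast x.2) with hx | hx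
      · refine SimpleGraph.Adj.reachable ?_
        show G'.Adj x.1 t
        rw [hx]; exact hadj
      · have : (G'.induce (T : Set V)).Reachable ⟨x.1, hx⟩ ⟨t, ht⟩ :=
          hconn.preconnected _ _
        have := this.map (SimpleGraph.induceHomOfLE G' hsub).toHom
        convert this using 2
        all_goals rfl
    exact (key y).symm

/-- If `G²(S)` is connected then each `c ∈ S` lies in a `{2,3}`-tree `T ⊆ S`
of size at least `|S|/Δ`, where the maximum degree of `G` is at most `Δ - 1`. -/
theorem stmt4 {C : Type*} [Fintype C] [DecidableEq C]
    (G : SimpleGraph C) (Δ : ℕ) (hΔpos : 1 ≤ Δ)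
    (hdeg : ∀ c, (Finset.univ.filter (fun c' => G.Adj c c')).card ≤ Δ - 1)
    (S : Finset C) (hS : ((sqGraph G).induce (S : Set C)).Connected)
    (c : C) (hc : c ∈ S) :
    ∃ T : Finset C, T ⊆ S ∧ IsTwoThreeTree G T ∧ c ∈ T ∧
      (S.card : ℝ) / (Δ : ℝ) ≤ (T.card : ℝ) := by
  classical
  -- the family of candidate trees
  set 𝒯 : Finset (Finset C) :=
    S.powerset.filter (fun T => c ∈ T ∧ IsTwoThreeTree G T) with h𝒯
  have hmem𝒯 : ∀ T, T ∈ 𝒯 ↔ T ⊆ S ∧ c ∈ T ∧ IsTwoThreeTree G T := by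
    intro T
    simp [h𝒯, Finset.mem_filter, Finset.mem_powerset]
  have hsingleton : ({c} : Finset C) ∈ 𝒯 := by
    rw [hmem𝒯]
    refine ⟨by simpa using hc, by simp, ?_, ?_⟩
    · intro u hu v hv huv
      simp only [Finset.mem_singleton] at hu hv
      exact absurd (hu.trans hv.symm) huv
    · rw [Finset.coe_singleton]
      exact connected_induce_singleton (closeGraph G) c
  obtain ⟨T, hT𝒯, hTmax⟩ := Finset.exists_max_image 𝒯 Finset.card ⟨_, hsingleton⟩
  rw [hmem𝒯] at hT𝒯
  obtain ⟨hTS, hcT, hTindep, hTconn⟩ := hT𝒯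
  -- extension step
  have hext : ∀ v u : C, v ∈ S → u ∈ S → (∃ t ∈ T, v = t ∨ G.Adj t v) →
      (sqGraph G).Adj v u → (∃ t ∈ T, u = t ∨ G.Adj t u) := by
    intro v u hvS huS ⟨t, htT, hvt⟩ hadj
    by_contra huncov
    push_neg at huncov
    have hune : ∀ t' ∈ T, u ≠ t' := fun t' ht' => (huncov t' ht').1
    have hunadj : ∀ t' ∈ T, ¬ G.Adj t' u := fun t' ht' => (huncov t' ht').2
    have huT : u ∉ T := fun h => hune u h rfl
    -- a walk from u to t of length ≤ 3
    obtain ⟨hne, hd⟩ := hadj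
    have hwuv : ∃ p : G.Walk u v, p.length ≤ 2 := by
      rcases hd with h | h
      · exact ⟨h.symm.toWalk, by simp⟩
      · have h0 : G.dist u v ≠ 0 := by rw [SimpleGraph.dist_comm]; omega
        obtain ⟨p, hp⟩ := SimpleGraph.exists_walk_of_dist_ne_zero h0
        refine ⟨p, ?_⟩
        rw [hp, SimpleGraph.dist_comm, h]
    have hwvt : ∃ q : G.Walk v t, q.length ≤ 1 := by
      rcases hvt with rfl | h
      · exact ⟨SimpleGraph.Walk.nil, by simp⟩
      · exact ⟨h.symm.toWalk, by simp⟩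
    obtain ⟨p, hp⟩ := hwuv
    obtain ⟨q, hq⟩ := hwvt
    have hdle : G.dist u t ≤ 3 := by
      have := SimpleGraph.dist_le (p.append q)
      rw [SimpleGraph.Walk.length_append] at this
      omega
    have hreach : G.Reachable u t := ⟨p.append q⟩
    have hd0 : 0 < G.dist u t := hreach.pos_dist_of_ne (hune t htT)
    have hd1 : G.dist u t ≠ 1 := by
      intro h
      rw [SimpleGraph.dist_eq_one_iff_adj] at h
      exact hunadj t htT h.symm
    have hclose : (closeGraph G).Adj u t :=
      ⟨hune t htT, by omega⟩
    -- extend T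
    have hT' : insert u T ∈ 𝒯 := by
      rw [hmem𝒯]
      refine ⟨Finset.insert_subset huS hTS, Finset.mem_insert_of_mem hcT, ?_, ?_⟩
      · intro a ha b hb hab hadj2
        rcases Finset.mem_insert.mp ha with ha | ha <;>
          rcases Finset.mem_insert.mp hb with hb | hb
        · exact hab (ha.trans hb.symm)
        · exact hunadj b hb (G.adj_symm (ha ▸ hadj2))
        · exact hunadj a ha (hb ▸ hadj2)
        · exact hTindep a ha b hb hab hadj2
      · exact connected_induce_insert (closeGraph G) T u t htT hclose hTconn
    have := hTmax _ hT'
    rw [Finset.card_insert_of_notMem huT] at this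
    omega
  -- propagate coverage along walks in the induced square graph
  have hcover : ∀ u ∈ S, ∃ t ∈ T, u = t ∨ G.Adj t u := by
    have hcrec : ∀ (a b : (S : Set C)),
        ((sqGraph G).induce (S : Set C)).Walk a b →
        (∃ t ∈ T, a.1 = t ∨ G.Adj t a.1) → (∃ t ∈ T, b.1 = t ∨ G.Adj t b.1) := by
      intro a b w
      induction w with
      | nil => exact id
      | cons h p ih =>
        intro hca
        exact ih (hext _ _ (by exact_mod_cast (Subtype.mem _))
          (by exact_mod_cast (Subtype.mem _)) hca h)
    intro u hu
    obtain ⟨w⟩ := hS.preconnected ⟨c, hc⟩ ⟨u, hu⟩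
    exact hcrec _ _ w ⟨c, hcT, Or.inl rfl⟩
  -- counting
  have hcount : S.card ≤ T.card * Δ := by
    have hsub : S ⊆ T.biUnion (fun t => insert t (Finset.univ.filter (fun c' => G.Adj t c'))) := by
      intro u hu
      obtain ⟨t, htT, h⟩ := hcover u hu
      refine Finset.mem_biUnion.mpr ⟨t, htT, ?_⟩
      rcases h with rfl | h
      · exact Finset.mem_insert_self _ _
      · exact Finset.mem_insert_of_mem (by simp [h])
    calc S.card ≤ (T.biUnion (fun t => insert t (Finset.univ.filter (fun c' => G.Adj t c')))).card :=
          Finset.card_le_card hsub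
      _ ≤ ∑ t ∈ T, (insert t (Finset.univ.filter (fun c' => G.Adj t c'))).card :=
          Finset.card_biUnion_le
      _ ≤ ∑ t ∈ T, Δ := by
          refine Finset.sum_le_sum fun t _ => ?_
          have := Finset.card_insert_le t (Finset.univ.filter (fun c' => G.Adj t c'))
          have := hdeg t
          omega
      _ = T.card * Δ := by rw [Finset.sum_const, smul_eq_mul]
  refine ⟨T, hTS, ⟨hTindep, hTconn⟩, hcT, ?_⟩
  rw [div_le_iff₀ (by exact_mod_cast hΔpos)]
  exact_mod_cast hcount
end
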